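/- arXiv:2512.19371 — 2 statements merged into one kernel-verified Lean document; each statement's English description precedes it below -/
import Mathlib

section
/- Let q = 2^m with m ≥ 3, e with gcd(e, m) = 1, σ = 2^e. The matrix M_{a,b,c,d} associated to M ∈ GL(2, F_q) (as in the lifted action) is invertible; that is, the map GL(2, F_q) → GL(4, F_q), M ↦ M_{a,b,c,d}, lands in invertible matrices and induces a group homomorphism PGL(2, F_q) → PGL(4, F_q) which is injective. -/
open Matrix

/-!
In characteristic 2 and for `σ = 2 ^ e`, the map `x ↦ x ^ σ` is a ring endomorphism, and
`M_{a,b,c,d}` is the Kronecker product `M^(σ) ⊗ M` of the Frobenius twist of `M = [[a,b],[c,d]]`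
with `M`, written in the basis `e₀⊗e₀, e₀⊗e₁, e₁⊗e₀, e₁⊗e₁`. Hence `M ↦ M_{a,b,c,d}` is
multiplicative and preserves invertibility; its corner entries `b^(σ+1)`, `c^(σ+1)` and the
diagonal entries `a^(σ+1)`, `a^σ d`, `d^(σ+1)` show that it is scalar exactly when `M` is.
-/

/-- The lifted 4×4 matrix `M_{a,b,c,d}` associated to `[[a,b],[c,d]]` and `σ`. -/
def liftMat {F : Type*} [Field F] (σ : ℕ) (a b c d : F) : Matrix (Fin 4) (Fin 4) F :=
  !![a ^ (σ + 1), a ^ σ * b, a * b ^ σ, b ^ (σ + 1);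
     a ^ σ * c, a ^ σ * d, b ^ σ * c, b ^ σ * d;
     a * c ^ σ, b * c ^ σ, a * d ^ σ, b * d ^ σ;
     c ^ (σ + 1), c ^ σ * d, c * d ^ σ, d ^ (σ + 1)]

namespace Matrix

variable {R : Type*} [CommRing R] {n : Type*} [Fintype n] [DecidableEq n]

def twistedKroneckerHom (f : R →+* R) : Matrix n n R →* Matrix (n × n) (n × n) R where
  toFun M := kroneckerMap (· * ·) (M.map f) M
  map_one' := by
    rw [Matrix.map_one f (map_zero f) (map_one f)]
    exact kroneckerMap_one_one _ zero_mul mul_zero (one_mul 1)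
  map_mul' M N := by
    simp only [Matrix.map_mul, mul_kronecker_mul]

theorem mem_range_scalar_fin_two_iff {S : Type*} [Semiring S] (M : Matrix (Fin 2) (Fin 2) S) :
    M ∈ Set.range (scalar (Fin 2)) ↔ M 0 1 = 0 ∧ M 1 0 = 0 ∧ M 0 0 = M 1 1 := by
  constructor
  · rintro ⟨r, rfl⟩
    simp
  · rintro ⟨h01, h10, h⟩
    exact ⟨M 1 1, by ext i j; fin_cases i <;> fin_cases j <;> simp [h01, h10, h]⟩

end Matrix

section Lift

variable {F : Type*} [Field F] (p e : ℕ) [ExpChar F p]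

noncomputable def liftMatHom : Matrix (Fin 2) (Fin 2) F →* Matrix (Fin 4) (Fin 4) F :=
  (reindexRingEquiv F (finProdFinEquiv : Fin 2 × Fin 2 ≃ Fin (2 * 2))).toMonoidHom.comp
    (twistedKroneckerHom (iterateFrobenius F p e))

theorem liftMatHom_apply (M : Matrix (Fin 2) (Fin 2) F) :
    liftMatHom p e M = liftMat (p ^ e) (M 0 0) (M 0 1) (M 1 0) (M 1 1) := by
  ext i j
  fin_cases i <;> fin_cases j <;>
    simp [liftMatHom, twistedKroneckerHom, liftMat, iterateFrobenius_def, finProdFinEquiv,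
      Fin.divNat, Fin.modNat] <;> ring

theorem isUnit_liftMat {a b c d : F} (h : a * d - b * c ≠ 0) :
    IsUnit (liftMat (p ^ e) a b c d) := by
  have hM : IsUnit !![a, b; c, d] := by
    rwa [isUnit_iff_isUnit_det, det_fin_two_of, isUnit_iff_ne_zero]
  simpa [liftMatHom_apply] using hM.map (liftMatHom p e)

end Lift

theorem liftMat_mem_range_scalar_iff {F : Type*} [Field F] {σ : ℕ} (hσ : σ ≠ 0) (a b c d : F) :
    liftMat σ a b c d ∈ Set.range (scalar (Fin 4)) ↔ b = 0 ∧ c = 0 ∧ a = d := by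
  constructor
  · rintro ⟨r, hr⟩
    have entry (i j : Fin 4) := congrFun (congrFun hr i) j
    have hb : b ^ (σ + 1) = 0 := by simpa [liftMat] using (entry 0 3).symm
    have hc : c ^ (σ + 1) = 0 := by simpa [liftMat] using (entry 3 0).symm
    have ha : r = a ^ (σ + 1) := by simpa [liftMat] using entry 0 0
    have had : r = a ^ σ * d := by simpa [liftMat] using entry 1 1
    have hd : r = d ^ (σ + 1) := by simpa [liftMat] using entry 3 3
    have root_zero {x : F} : x ^ (σ + 1) = 0 → x = 0 := (pow_eq_zero_iff σ.succ_ne_zero).mp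
    refine ⟨root_zero hb, root_zero hc, ?_⟩
    rcases eq_or_ne a 0 with rfl | ha0
    · exact (root_zero (hd.symm.trans (ha.trans (zero_pow σ.succ_ne_zero)))).symm
    · exact mul_left_cancel₀ (pow_ne_zero σ ha0) (by rw [← pow_succ, ← ha, had])
  · rintro ⟨rfl, rfl, rfl⟩
    refine ⟨a ^ (σ + 1), ?_⟩
    ext i j
    fin_cases i <;> fin_cases j <;> simp [liftMat, hσ, pow_succ, mul_comm]

theorem stmt8_general (m : ℕ) (q : ℕ) (hq : q = 2 ^ m)
    (e : ℕ) (σ : ℕ) (hσ : σ = 2 ^ e)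
    (F : Type*) [Field F] [Fintype F] (hF : Fintype.card F = q) :
    (∀ a b c d : F, a * d - b * c ≠ 0 → IsUnit (liftMat σ a b c d)) ∧
    ∃ Φ : GL (Fin 2) F →* GL (Fin 4) F,
      (∀ M : GL (Fin 2) F,
          (Φ M : Matrix (Fin 4) (Fin 4) F) =
            liftMat σ (M.val 0 0) (M.val 0 1) (M.val 1 0) (M.val 1 1)) ∧
      (∀ M : GL (Fin 2) F,
          Φ M ∈ Subgroup.center (GL (Fin 4) F) ↔ M ∈ Subgroup.center (GL (Fin 2) F)) := by
  subst hq hσ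
  have : CharP F 2 := charP_of_card_eq_prime_pow hF
  refine ⟨fun a b c d => isUnit_liftMat 2 e, Units.map (liftMatHom 2 e),
    fun M => liftMatHom_apply 2 e M.val, fun M => ?_⟩
  rw [GeneralLinearGroup.mem_center_iff_val_mem_range_scalar,
    GeneralLinearGroup.mem_center_iff_val_mem_range_scalar, Units.coe_map,
    liftMatHom_apply, liftMat_mem_range_scalar_iff (pow_ne_zero e two_ne_zero),
    mem_range_scalar_fin_two_iff]

/-- For `q = 2^m`, `m ≥ 3`, `gcd(e, m) = 1`, `σ = 2^e`, the matrix
`M_{a,b,c,d}` associated to an invertible `M` is invertible, and `M ↦ M_{a,b,c,d}`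
yields a group homomorphism `GL(2, F_q) → GL(4, F_q)` which sends the center to
the center and nothing else to it, i.e. induces an injective homomorphism
`PGL(2, F_q) → PGL(4, F_q)`. -/
theorem stmt8 (m : ℕ) (hm : 3 ≤ m) (q : ℕ) (hq : q = 2 ^ m)
    (e : ℕ) (he : Nat.gcd e m = 1) (σ : ℕ) (hσ : σ = 2 ^ e)
    (F : Type*) [Field F] [Fintype F] (hF : Fintype.card F = q) :
    (∀ a b c d : F, a * d - b * c ≠ 0 → IsUnit (liftMat σ a b c d)) ∧
    ∃ Φ : GL (Fin 2) F →* GL (Fin 4) F,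
      (∀ M : GL (Fin 2) F,
          (Φ M : Matrix (Fin 4) (Fin 4) F) =
            liftMat σ (M.val 0 0) (M.val 0 1) (M.val 1 0) (M.val 1 1)) ∧
      (∀ M : GL (Fin 2) F,
          Φ M ∈ Subgroup.center (GL (Fin 4) F) ↔ M ∈ Subgroup.center (GL (Fin 2) F)) :=
  stmt8_general m q hq e σ hσ F hF
end

section
/- Let q = 2^m with m ≥ 3 and n = q + 1. Suppose k ≡ ±2^e (mod n) for some integer e ≥ 1 with gcd(e, m) = 1. Then for all pairwise distinct x, y, z, w ∈ U_{q+1} ⊂ F_{q²}^×, the cross-ratio identity CR(x^k, y^k; z^k, w^k) = CR(x, y; z, w)^{2^e} holds; in particular, since CR(x,y;z,w) ∈ F_q \ {0,1} and the fixed field of t ↦ t^{2^e} in F_{2^m} is F_2, there are no pairwise distinct x, y, z, w ∈ U_{q+1} with CR(x, y; z, w) = CR(x^k, y^k; z^k, w^k). -/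
/-- The cross-ratio `CR(x, y; z, w) = ((x-z)(y-w))/((x-w)(y-z))`. -/
def crossRatio {K : Type*} [Field K] (x y z w : K) : K :=
  ((x - z) * (y - w)) / ((x - w) * (y - z))

/-!
On `U_{q+1}` the power map `u ↦ u ^ k` is the Frobenius power `u ↦ u ^ 2 ^ e`, possibly followed
by inversion `u ↦ u⁻¹ = u ^ q`. The cross-ratio commutes with field automorphisms and is
invariant under inversion of all four points, which gives the identity. The same two facts show
that a cross-ratio `t` of points of `U_{q+1}` satisfies `t ^ 2 ^ m = t`; if moreover
`t ^ 2 ^ e = t`, then `t` is a periodic point of squaring with coprime periods `e` and `m`, so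
`t ^ 2 = t`, which is impossible for distinct points since then `t ≠ 0, 1`.
-/

lemma pow_eq_self_of_pow_pow_eq_self {M : Type*} [Monoid M] {p a b : ℕ} {t : M}
    (ha : t ^ p ^ a = t) (hb : t ^ p ^ b = t) (hab : a.gcd b = 1) : t ^ p = t := by
  have hper : ∀ {c}, t ^ p ^ c = t → Function.IsPeriodicPt (· ^ p) c t := fun h => by
    rwa [Function.IsPeriodicPt, Function.IsFixedPt, pow_iterate]
  simpa [Function.IsPeriodicPt, Function.IsFixedPt, hab] using (hper ha).gcd (hper hb)

lemma pow_eq_inv_of_natCast_eq_neg {G : Type*} [DivisionMonoid G] {u : G} {n k a : ℕ}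
    (hu : u ^ n = 1) (hk : (k : ZMod n) = -a) : u ^ k = (u ^ a)⁻¹ := by
  refine eq_inv_of_mul_eq_one_left ?_
  rw [← pow_add, pow_eq_pow_of_modEq ((ZMod.natCast_eq_natCast_iff _ _ _).1 ?_) hu, pow_zero]
  push_cast
  rw [hk, neg_add_cancel]

section CrossRatio

variable {K : Type*} [Field K]

lemma crossRatio_map {L : Type*} [Field L] (φ : K →+* L) (x y z w : K) :
    crossRatio (φ x) (φ y) (φ z) (φ w) = φ (crossRatio x y z w) := by
  simp only [crossRatio, map_div₀, map_mul, map_sub]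

lemma crossRatio_inv {x y z w : K} (hx : x ≠ 0) (hy : y ≠ 0) (hz : z ≠ 0) (hw : w ≠ 0) :
    crossRatio x⁻¹ y⁻¹ z⁻¹ w⁻¹ = crossRatio x y z w := by
  simp only [crossRatio, inv_sub_inv, *, ne_eq, not_false_eq_true]
  rw [div_mul_div_comm, div_mul_div_comm, show x * w * (y * z) = x * z * (y * w) by ring,
    div_div_div_cancel_right₀ (by positivity),
    ← neg_sub x z, ← neg_sub y w, ← neg_sub x w, ← neg_sub y z, neg_mul_neg, neg_mul_neg]

lemma crossRatio_ne_zero {x y z w : K} (hxz : x ≠ z) (hyw : y ≠ w) (hxw : x ≠ w)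
    (hyz : y ≠ z) : crossRatio x y z w ≠ 0 :=
  div_ne_zero (mul_ne_zero (sub_ne_zero.2 hxz) (sub_ne_zero.2 hyw))
    (mul_ne_zero (sub_ne_zero.2 hxw) (sub_ne_zero.2 hyz))

lemma crossRatio_ne_one {x y z w : K} (hxy : x ≠ y) (hzw : z ≠ w) (hxw : x ≠ w)
    (hyz : y ≠ z) : crossRatio x y z w ≠ 1 := by
  rw [crossRatio, ne_eq, div_eq_one_iff_eq (mul_ne_zero (sub_ne_zero.2 hxw) (sub_ne_zero.2 hyz))]
  intro h
  have : (x - y) * (z - w) = 0 := by linear_combination h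
  rcases mul_eq_zero.1 this with h | h
  · exact hxy (sub_eq_zero.1 h)
  · exact hzw (sub_eq_zero.1 h)

section ExpChar

variable (p : ℕ) [ExpChar K p]

lemma crossRatio_pow_expChar_pow (c : ℕ) (x y z w : K) :
    crossRatio (x ^ p ^ c) (y ^ p ^ c) (z ^ p ^ c) (w ^ p ^ c) = crossRatio x y z w ^ p ^ c :=
  crossRatio_map (iterateFrobenius K p c) x y z w

lemma crossRatio_pow_of_natCast_eq_or_eq_neg {n k c : ℕ} (hn : n ≠ 0)
    (hk : (k : ZMod n) = (p ^ c : ℕ) ∨ (k : ZMod n) = -(p ^ c : ℕ)) {x y z w : K}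
    (hx : x ^ n = 1) (hy : y ^ n = 1) (hz : z ^ n = 1) (hw : w ^ n = 1) :
    crossRatio (x ^ k) (y ^ k) (z ^ k) (w ^ k) = crossRatio x y z w ^ p ^ c := by
  rcases hk with hk | hk
  · have hpow {u : K} (hu : u ^ n = 1) : u ^ k = u ^ p ^ c :=
      pow_eq_pow_of_modEq ((ZMod.natCast_eq_natCast_iff _ _ _).1 hk) hu
    rw [hpow hx, hpow hy, hpow hz, hpow hw, crossRatio_pow_expChar_pow]
  · have hpow {u : K} (hu : u ^ n = 1) : u ^ k = (u ^ p ^ c)⁻¹ :=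
      pow_eq_inv_of_natCast_eq_neg hu hk
    have hne {u : K} (hu : u ^ n = 1) : u ^ p ^ c ≠ 0 :=
      pow_ne_zero _ (ne_zero_pow hn (hu ▸ one_ne_zero))
    rw [hpow hx, hpow hy, hpow hz, hpow hw, crossRatio_inv (hne hx) (hne hy) (hne hz) (hne hw),
      crossRatio_pow_expChar_pow]

lemma crossRatio_pow_eq_self_of_pow_succ_eq_one (c : ℕ) {x y z w : K} (hx : x ^ (p ^ c + 1) = 1)
    (hy : y ^ (p ^ c + 1) = 1) (hz : z ^ (p ^ c + 1) = 1) (hw : w ^ (p ^ c + 1) = 1) :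
    crossRatio x y z w ^ p ^ c = crossRatio x y z w := by
  have hinv {u : K} (hu : u ^ (p ^ c + 1) = 1) : u ^ p ^ c = u⁻¹ :=
    eq_inv_of_mul_eq_one_left (pow_succ u _ ▸ hu)
  have hne {u : K} (hu : u ^ (p ^ c + 1) = 1) : u ≠ 0 :=
    ne_zero_pow (Nat.succ_ne_zero _) (hu ▸ one_ne_zero)
  rw [← crossRatio_pow_expChar_pow, hinv hx, hinv hy, hinv hz, hinv hw,
    crossRatio_inv (hne hx) (hne hy) (hne hz) (hne hw)]

end ExpChar

end CrossRatio

theorem stmt19_general (m : ℕ) (q n : ℕ) (hq : q = 2 ^ m) (hn : n = q + 1)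
    (K : Type*) [Field K] [Fintype K] (hK : Fintype.card K = q ^ 2)
    (k e : ℕ) (he : Nat.gcd e m = 1)
    (hk : (k : ZMod n) = 2 ^ e ∨ (k : ZMod n) = -(2 ^ e)) :
    (∀ x y z w : K, x ^ n = 1 → y ^ n = 1 → z ^ n = 1 → w ^ n = 1 →
      x ≠ y → x ≠ z → x ≠ w → y ≠ z → y ≠ w → z ≠ w →
      crossRatio (x ^ k) (y ^ k) (z ^ k) (w ^ k) = (crossRatio x y z w) ^ (2 ^ e)) ∧
    ¬∃ x y z w : K, x ^ n = 1 ∧ y ^ n = 1 ∧ z ^ n = 1 ∧ w ^ n = 1 ∧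
      x ≠ y ∧ x ≠ z ∧ x ≠ w ∧ y ≠ z ∧ y ≠ w ∧ z ≠ w ∧
      crossRatio x y z w = crossRatio (x ^ k) (y ^ k) (z ^ k) (w ^ k) := by
  subst hq hn
  have : Fact (Nat.Prime 2) := ⟨Nat.prime_two⟩
  have : CharP K 2 := charP_of_card_eq_prime_pow (hK.trans (pow_mul 2 m 2).symm)
  have hk' : (k : ZMod (2 ^ m + 1)) = (2 ^ e : ℕ) ∨ (k : ZMod (2 ^ m + 1)) = -(2 ^ e : ℕ) :=
    by exact_mod_cast hk
  have hpow {x y z w : K} (hx : x ^ (2 ^ m + 1) = 1) (hy : y ^ (2 ^ m + 1) = 1)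
      (hz : z ^ (2 ^ m + 1) = 1) (hw : w ^ (2 ^ m + 1) = 1) :=
    crossRatio_pow_of_natCast_eq_or_eq_neg 2 (Nat.succ_ne_zero _) hk' hx hy hz hw
  refine ⟨fun x y z w hx hy hz hw _ _ _ _ _ _ => hpow hx hy hz hw, ?_⟩
  rintro ⟨x, y, z, w, hx, hy, hz, hw, hxy, hxz, hxw, hyz, hyw, hzw, hfix⟩
  have hte : crossRatio x y z w ^ 2 ^ e = crossRatio x y z w :=
    (hpow hx hy hz hw).symm.trans hfix.symm
  have htm := crossRatio_pow_eq_self_of_pow_succ_eq_one 2 m hx hy hz hw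
  rcases eq_zero_or_one_of_sq_eq_self (pow_eq_self_of_pow_pow_eq_self hte htm he) with h | h
  · exact crossRatio_ne_zero hxz hyw hxw hyz h
  · exact crossRatio_ne_one hxy hzw hxw hyz h

/-- Let `q = 2^m`, `m ≥ 3`, `n = q + 1`, and suppose
`k ≡ ±2^e (mod n)` with `e ≥ 1`, `gcd(e, m) = 1`. Then for all pairwise distinct
`x, y, z, w ∈ U_{q+1} ⊂ F_{q²}^×` one has
`CR(x^k, y^k; z^k, w^k) = CR(x, y; z, w)^{2^e}`; in particular there are no
pairwise distinct `x, y, z, w ∈ U_{q+1}` with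
`CR(x, y; z, w) = CR(x^k, y^k; z^k, w^k)`. -/
theorem stmt19 (m : ℕ) (hm : 3 ≤ m) (q n : ℕ) (hq : q = 2 ^ m) (hn : n = q + 1)
    (K : Type*) [Field K] [Fintype K] (hK : Fintype.card K = q ^ 2)
    (k e : ℕ) (he1 : 1 ≤ e) (he : Nat.gcd e m = 1)
    (hk : (k : ZMod n) = 2 ^ e ∨ (k : ZMod n) = -(2 ^ e)) :
    (∀ x y z w : K, x ^ n = 1 → y ^ n = 1 → z ^ n = 1 → w ^ n = 1 →
      x ≠ y → x ≠ z → x ≠ w → y ≠ z → y ≠ w → z ≠ w →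
      crossRatio (x ^ k) (y ^ k) (z ^ k) (w ^ k) = (crossRatio x y z w) ^ (2 ^ e)) ∧
    ¬∃ x y z w : K, x ^ n = 1 ∧ y ^ n = 1 ∧ z ^ n = 1 ∧ w ^ n = 1 ∧
      x ≠ y ∧ x ≠ z ∧ x ≠ w ∧ y ≠ z ∧ y ≠ w ∧ z ≠ w ∧
      crossRatio x y z w = crossRatio (x ^ k) (y ^ k) (z ^ k) (w ^ k) :=
  stmt19_general m q n hq hn K hK k e he hk
end
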